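/- Let M be an m×n matrix over ZMod 2, let k < j be column indices, and let M' be the matrix obtained from M by adding column k to column j (entrywise sum in ZMod 2). If R = M * V is a reduction of M and R' = M' * V' is a reduction of M', then for every column index l, column l of R is zero if and only if column l of R' is zero, and when nonzero low_R(l) = low_{R'}(l). -/

import Mathlib

/-!
Right multiplication by an upper-triangular `W` turns each column `l` of a reduced `R` into a
combination of columns `p ≤ l`, whose lows are pairwise distinct, so the low of column `l` of
`R * W` is the low of some column `p ≤ l` of `R`. Adding column `k < j` to column `j` is right
multiplication by the upper-triangular involution `1 + E_kj`, hence each of the two reductions is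
obtained from the other by an upper-triangular factor. If the low of column `l` of one of them sat
in a column `p < l` of the other, going back it would sit in a column `q ≤ p < l` of the first,
contradicting reducedness.
-/

/-- `i` is the lowest nonzero row index of column `j` of `R`. -/
def IsLow {m n : ℕ} (R : Matrix (Fin m) (Fin n) (ZMod 2)) (j : Fin n) (i : Fin m) : Prop :=
  R i j ≠ 0 ∧ ∀ i' : Fin m, R i' j ≠ 0 → i' ≤ i

/-- No two distinct nonzero columns of `R` have the same lowest nonzero row index. -/
def Reduced {m n : ℕ} (R : Matrix (Fin m) (Fin n) (ZMod 2)) : Prop :=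
  ∀ j k : Fin n, j ≠ k → ∀ i i' : Fin m, IsLow R j i → IsLow R k i' → i ≠ i'

/-- `W` is upper-triangular: `W i j = 0` whenever `i > j`. -/
def UpperTri {n : ℕ} (W : Matrix (Fin n) (Fin n) (ZMod 2)) : Prop :=
  ∀ i j : Fin n, j < i → W i j = 0

open Matrix Finset

variable {m n : ℕ}

namespace IsLow

variable {R : Matrix (Fin m) (Fin n) (ZMod 2)} {l : Fin n} {i i' : Fin m}

theorem eq_zero_of_lt (h : IsLow R l i) (hi : i < i') : R i' l = 0 :=
  by_contra fun hne => (h.2 i' hne).not_gt hi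

theorem unique (h : IsLow R l i) (h' : IsLow R l i') : i = i' :=
  le_antisymm (h'.2 i h.1) (h.2 i' h'.1)

end IsLow

theorem exists_isLow_of_ne_zero {R : Matrix (Fin m) (Fin n) (ZMod 2)} {l : Fin n} {i : Fin m}
    (h : R i l ≠ 0) : ∃ i, IsLow R l i := by
  classical
  set T := univ.filter fun i' => R i' l ≠ 0
  have hT : T.Nonempty := ⟨i, mem_filter.2 ⟨mem_univ _, h⟩⟩
  exact ⟨T.max' hT, (mem_filter.1 (T.max'_mem hT)).2,
    fun i' hi' => T.le_max' i' (mem_filter.2 ⟨mem_univ _, hi'⟩)⟩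

theorem forall_eq_zero_iff_forall_not_isLow {R : Matrix (Fin m) (Fin n) (ZMod 2)} {l : Fin n} :
    (∀ i, R i l = 0) ↔ ∀ i, ¬IsLow R l i := by
  refine ⟨fun h i hi => hi.1 (h i), fun h i => by_contra fun hne => ?_⟩
  obtain ⟨i', hi'⟩ := exists_isLow_of_ne_zero hne
  exact h i' hi'

section Reduced

variable {R S : Matrix (Fin m) (Fin n) (ZMod 2)} {W W' : Matrix (Fin n) (Fin n) (ZMod 2)}
  {l : Fin n} {i : Fin m}

theorem isLow_mul_of_forall_le (hR : Reduced R) {p : Fin n} (hp : IsLow R p i) (hWp : W p l ≠ 0)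
    (hmax : ∀ c i', W c l ≠ 0 → IsLow R c i' → i' ≤ i) : IsLow (R * W) l i := by
  have hsingle : ∀ i', i ≤ i' → (R * W) i' l = R i' p * W p l := by
    intro i' hi'
    rw [mul_apply]
    refine sum_eq_single p (fun c _ hcp => by_contra fun hne => ?_) (by simp)
    have hRc : R i' c ≠ 0 := left_ne_zero_of_mul hne
    obtain ⟨i₁, h₁⟩ := exists_isLow_of_ne_zero hRc
    exact hR c p hcp i₁ i h₁ hp
      (le_antisymm (hmax c i₁ (right_ne_zero_of_mul hne) h₁) (hi'.trans (h₁.2 i' hRc)))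
  refine ⟨?_, fun i' hi' => not_lt.1 fun hlt => hi' ?_⟩
  · rw [hsingle i le_rfl]
    exact mul_ne_zero hp.1 hWp
  · rw [hsingle i' hlt.le, hp.eq_zero_of_lt hlt, zero_mul]

theorem IsLow.exists_isLow_le_of_mul (hR : Reduced R) (hW : UpperTri W)
    (h : IsLow (R * W) l i) : ∃ p ≤ l, IsLow R p i := by
  classical
  set L := univ.filter fun i' => ∃ c, W c l ≠ 0 ∧ IsLow R c i'
  have hL : L.Nonempty := by
    have hne := h.1
    rw [mul_apply] at hne
    obtain ⟨c, -, hc⟩ := exists_ne_zero_of_sum_ne_zero hne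
    obtain ⟨i', hi'⟩ := exists_isLow_of_ne_zero (left_ne_zero_of_mul hc)
    exact ⟨i', mem_filter.2 ⟨mem_univ _, c, right_ne_zero_of_mul hc, hi'⟩⟩
  obtain ⟨p, hWp, hp⟩ := (mem_filter.1 (L.max'_mem hL)).2
  have hlow : IsLow (R * W) l (L.max' hL) := isLow_mul_of_forall_le hR hp hWp
    fun c i' hc hi' => L.le_max' i' (mem_filter.2 ⟨mem_univ _, c, hc, hi'⟩)
  exact ⟨p, not_lt.1 fun hlt => hWp (hW p l hlt), h.unique hlow ▸ hp⟩

theorem IsLow.of_mul_upperTri (hR : Reduced R) (hS : Reduced S) (hSR : S = R * W)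
    (hRS : R = S * W') (hW : UpperTri W) (hW' : UpperTri W') (h : IsLow S l i) :
    IsLow R l i := by
  subst hSR
  obtain ⟨p, hpl, hp⟩ := h.exists_isLow_le_of_mul hR hW
  rcases hpl.eq_or_lt with rfl | hlt
  · exact hp
  · obtain ⟨q, hqp, hq⟩ := (hRS ▸ hp).exists_isLow_le_of_mul hS hW'
    exact absurd rfl (hS l q (hqp.trans_lt hlt).ne' i i h hq)

theorem isLow_iff_of_mul_upperTri (hR : Reduced R) (hS : Reduced S) (hSR : S = R * W)
    (hRS : R = S * W') (hW : UpperTri W) (hW' : UpperTri W') : IsLow R l i ↔ IsLow S l i :=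
  ⟨.of_mul_upperTri hS hR hRS hSR hW' hW, .of_mul_upperTri hR hS hSR hRS hW hW'⟩

end Reduced

theorem isLow_mul_iff_of_upperTri {A B : Matrix (Fin m) (Fin n) (ZMod 2)}
    {E F V V' : Matrix (Fin n) (Fin n) (ZMod 2)} (hBA : B = A * E) (hAB : A = B * F)
    (hE : UpperTri E) (hF : UpperTri F) (hV : IsUnit V) (hUT : UpperTri V) (hV' : IsUnit V')
    (hUT' : UpperTri V') (hRed : Reduced (A * V)) (hRed' : Reduced (B * V')) {l : Fin n}
    {i : Fin m} : IsLow (A * V) l i ↔ IsLow (B * V') l i := by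
  -- `UpperTri W` unfolds to `W.BlockTriangular id`, so Mathlib's block-triangular API applies.
  have := hV.invertible
  have := hV'.invertible
  refine isLow_iff_of_mul_upperTri hRed hRed' (W := V⁻¹ * E * V') (W' := V'⁻¹ * F * V)
    ?_ ?_ (((blockTriangular_inv_of_blockTriangular hUT).mul hE).mul hUT')
    (((blockTriangular_inv_of_blockTriangular hUT').mul hF).mul hUT)
  · simp only [← Matrix.mul_assoc, mul_inv_cancel_right_of_invertible, hBA]
  · simp only [← Matrix.mul_assoc, mul_inv_cancel_right_of_invertible, ← hAB]

/-- If `M'` is obtained from `M` by adding column `k` to column `j` (with `k < j`), then any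
reduction of `M` and any reduction of `M'` have the same zero columns and the same lowest
nonzero row indices on nonzero columns. -/
theorem reduction_addCol_pairing {m n : ℕ} (M : Matrix (Fin m) (Fin n) (ZMod 2)) (k j : Fin n)
    (hkj : k < j)
    (M' : Matrix (Fin m) (Fin n) (ZMod 2))
    (hM' : M' = Matrix.of fun a b => if b = j then M a j + M a k else M a b)
    (V V' : Matrix (Fin n) (Fin n) (ZMod 2))
    (hV : IsUnit V) (hUT : UpperTri V) (hRed : Reduced (M * V))
    (hV' : IsUnit V') (hUT' : UpperTri V') (hRed' : Reduced (M' * V')) (l : Fin n) :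
    ((∀ i : Fin m, (M * V) i l = 0) ↔ (∀ i : Fin m, (M' * V') i l = 0)) ∧
      ∀ i : Fin m, IsLow (M * V) l i ↔ IsLow (M' * V') l i := by
  set E := transvection k j (1 : ZMod 2)
  have hE : UpperTri E := blockTriangular_transvection hkj.le 1
  have hME : M' = M * E := by
    ext a b
    by_cases hb : b = j
    · subst hb
      simp [hM', E, add_comm]
    · simp [hM', E, hb]
  have hEE : E * E = 1 := by
    rw [transvection_mul_transvection_same _ _ hkj.ne, CharTwo.add_self_eq_zero, transvection_zero]
  have hM'E : M = M' * E := by rw [hME, Matrix.mul_assoc, hEE, Matrix.mul_one]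
  have hlow (i : Fin m) : IsLow (M * V) l i ↔ IsLow (M' * V') l i :=
    isLow_mul_iff_of_upperTri hME hM'E hE hE hV hUT hV' hUT' hRed hRed'
  exact ⟨by simp only [forall_eq_zero_iff_forall_not_isLow, hlow], hlow⟩
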